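/- Fix integers n ≥ 4 and 1 ≤ k ≤ n−1. Let U ⊆ (ℝ²)^{n−4} × ℝ^k be the set of tuples (A_5,…,A_n, t_{n−k+1},…,t_n) such that the points (0,0), (1,0), (1,1), (0,1), A_5,…,A_n are in strictly convex position in this cyclic order and each t_j lies in the open interval (0,1). Then U is a nonempty open subset of ℝ^{2n−8+k} which is homeomorphic to ℝ^{2n−8+k}. (U parametrizes normalized seeds of type (n,k), with B_j = A_j + t_j(A_{j+1} − A_j); hence the space C(n,k) of projective equivalence classes of labeled PLC pentagram spirals of type (n,k) is an open cell of dimension (2n−8)+k.) -/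

import Mathlib

/-- Planar determinant (cross product) of two vectors of `ℝ²`. -/
def det2 (u v : ℝ × ℝ) : ℝ := u.1 * v.2 - u.2 * v.1

/-- Counterclockwise orientation of an ordered triple of points of `ℝ²`. -/
def ccw (a b c : ℝ × ℝ) : Prop := 0 < det2 (b - a) (c - a)

/-- Points `w 0, …, w (N-1)` are in strictly convex position in this
(counterclockwise) cyclic order: every ordered triple is counterclockwise. -/
def StrictlyConvexCCW {N : ℕ} (w : Fin N → ℝ × ℝ) : Prop :=
  ∀ i j k : Fin N, i < j → j < k → ccw (w i) (w j) (w k)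

/-- The set `U` of tuples `(A₅, …, Aₙ, t_{n-k+1}, …, tₙ)` such that the points
`(0,0), (1,0), (1,1), (0,1), A₅, …, Aₙ` are in strictly convex position in this
cyclic order and each `t_j` lies in `(0,1)`.  `U` parametrizes normalized seeds of
type `(n,k)`, with `B_j = A_j + t_j (A_{j+1} - A_j)`. -/
def normSeedSet (n k : ℕ) : Set ((Fin (n - 4) → ℝ × ℝ) × (Fin k → ℝ)) :=
  {x | StrictlyConvexCCW (fun i : Fin n =>
        if h : (i : ℕ) < 4 then
          (![((0 : ℝ), (0 : ℝ)), (1, 0), (1, 1), (0, 1)] : Fin 4 → ℝ × ℝ) ⟨i, h⟩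
        else x.1 ⟨(i : ℕ) - 4, by have := i.isLt; omega⟩) ∧
      ∀ j : Fin k, x.2 j ∈ Set.Ioo (0 : ℝ) 1}

/-!
Append the free vertices `A₅, A₆, …` one at a time. If the polygon built so far ends with the
edge `u → v`, a point `p` may follow `v` exactly when it lies in the open region cut out by the
`x`-axis, the line `0v` and the line `uv`; by the transitivity of orientations the remaining
orientation conditions then hold automatically. Since every vertex after `(0, 1)` lies lower than
its predecessor, that region is an open triangle or half-strip, and an explicit projective chart
identifies it with `ℝ²`, continuously in `(u, v)`. By induction the admissible `(A₅, …, Aₙ)` form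
a copy of `ℝ^(2n-8)`, and each `t_j` ranges over `(0, 1) ≃ₜ ℝ`.
-/

open Set Real

lemma ccw.rotate {a b c : ℝ × ℝ} (h : ccw a b c) : ccw b c a := by
  unfold ccw det2 at *
  simp only [Prod.fst_sub, Prod.snd_sub] at *
  linarith

/- Both transitivity laws (Knuth's axiom 5 and its mirror image) come from the Grassmann–Plücker
relation `det2 s b * det2 a c = det2 s a * det2 b c + det2 s c * det2 a b`. -/
lemma ccw_trans {t s a b c : ℝ × ℝ} (hsa : ccw t s a) (hsb : ccw t s b) (hsc : ccw t s c)
    (hab : ccw t a b) (hbc : ccw t b c) : ccw t a c := by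
  unfold ccw det2 at *
  nlinarith [mul_pos hsa hbc, mul_pos hsc hab]

lemma ccw_trans' {t s a b c : ℝ × ℝ} (has : ccw t a s) (hbs : ccw t b s) (hcs : ccw t c s)
    (hab : ccw t a b) (hbc : ccw t b c) : ccw t a c := by
  unfold ccw det2 at *
  nlinarith [mul_pos has hbc, mul_pos hcs hab]

lemma ccw_zero_left_iff {a b : ℝ × ℝ} : ccw (0, 0) a b ↔ 0 < det2 a b := by
  simp [ccw, Prod.mk_zero_zero]

@[fun_prop]
lemma Continuous.det2 {X : Type*} [TopologicalSpace X] {f g : X → ℝ × ℝ} (hf : Continuous f)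
    (hg : Continuous g) : Continuous fun x => det2 (f x) (g x) := by
  unfold _root_.det2
  fun_prop

lemma strictlyConvexCCW_snoc_iff {N : ℕ} {c : Fin N → ℝ × ℝ} {p : ℝ × ℝ} :
    StrictlyConvexCCW (Fin.snoc c p : Fin (N + 1) → ℝ × ℝ) ↔
      StrictlyConvexCCW c ∧ ∀ i j, i < j → ccw (c i) (c j) p := by
  constructor
  · intro h
    refine ⟨fun i j k hij hjk => ?_, fun i j hij => ?_⟩
    · simpa using h i.castSucc j.castSucc k.castSucc (by simpa using hij) (by simpa using hjk)
    · simpa using h i.castSucc j.castSucc (Fin.last N) (by simpa using hij) (Fin.castSucc_lt_last j)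
  · rintro ⟨hc, hp⟩ i j k hij hjk
    obtain ⟨i, rfl⟩ := Fin.exists_castSucc_eq.2 (Fin.ne_last_of_lt (hij.trans hjk))
    obtain ⟨j, rfl⟩ := Fin.exists_castSucc_eq.2 (Fin.ne_last_of_lt hjk)
    rw [Fin.castSucc_lt_castSucc_iff] at hij
    induction k using Fin.lastCases with
    | last => simpa using hp i j hij
    | cast k => simpa using hc i j k hij (Fin.castSucc_lt_castSucc_iff.1 hjk)

section ends

variable {N : ℕ} {c : Fin (N + 3) → ℝ × ℝ} {p : ℝ × ℝ}

lemma StrictlyConvexCCW.ccw_zero_of_ccw_ends (hc : StrictlyConvexCCW c)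
    (h01 : ccw (c 0) (c 1) p) (h0last : ccw (c 0) (c (Fin.last (N + 2))) p) {j : Fin (N + 3)}
    (hj : j ≠ 0) : ccw (c 0) (c j) p := by
  by_cases hj1 : j = 1
  · rwa [hj1]
  by_cases hjl : j = Fin.last (N + 2)
  · rwa [hjl]
  have h0 : (0 : Fin (N + 3)).val = 0 := rfl
  have h1 : (1 : Fin (N + 3)).val = 1 := rfl
  have := Fin.val_ne_of_ne hj
  have := Fin.val_ne_of_ne hj1
  have := Fin.val_ne_of_ne hjl
  have := j.isLt
  have hl : (Fin.last (N + 2)).val = N + 2 := rfl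
  exact ccw_trans (s := c 1) (hc 0 1 j (by omega) (by omega)) (hc 0 1 _ (by omega) (by omega))
    h01 (hc 0 j _ (by omega) (by omega)) h0last

lemma StrictlyConvexCCW.ccw_last_of_ccw_ends (hc : StrictlyConvexCCW c)
    (hlast : ccw (c (Fin.last (N + 1)).castSucc) (c (Fin.last (N + 2))) p)
    (h0last : ccw (c 0) (c (Fin.last (N + 2))) p) {i : Fin (N + 3)} (hi : i ≠ Fin.last (N + 2)) :
    ccw (c i) (c (Fin.last (N + 2))) p := by
  by_cases hi0 : i = 0
  · rwa [hi0]
  by_cases his : i = (Fin.last (N + 1)).castSucc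
  · rwa [his]
  have h0 : (0 : Fin (N + 3)).val = 0 := rfl
  have := Fin.val_ne_of_ne hi
  have := Fin.val_ne_of_ne hi0
  have := Fin.val_ne_of_ne his
  have := i.isLt
  have hl : (Fin.last (N + 2)).val = N + 2 := rfl
  have hs : (Fin.last (N + 1)).castSucc.val = N + 1 := rfl
  exact (ccw_trans' hlast.rotate (hc 0 _ _ (by omega) (by omega)).rotate.rotate
    (hc i _ _ (by omega) (by omega)).rotate.rotate h0last.rotate
    (hc 0 i _ (by omega) (by omega)).rotate.rotate).rotate.rotate

lemma StrictlyConvexCCW.ccw_of_ccw_ends (hc : StrictlyConvexCCW c) (h01 : ccw (c 0) (c 1) p)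
    (hlast : ccw (c (Fin.last (N + 1)).castSucc) (c (Fin.last (N + 2))) p)
    (h0last : ccw (c 0) (c (Fin.last (N + 2))) p) :
    ∀ i j, i < j → ccw (c i) (c j) p := by
  intro i j hij
  by_cases hi0 : i = 0
  · exact hi0 ▸ hc.ccw_zero_of_ccw_ends h01 h0last (hi0 ▸ hij).ne'
  by_cases hjl : j = Fin.last (N + 2)
  · exact hjl ▸ hc.ccw_last_of_ccw_ends hlast h0last (hjl ▸ hij).ne
  have := Fin.val_ne_of_ne hi0
  have := Fin.val_ne_of_ne hjl
  have := j.isLt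
  have h0 : (0 : Fin (N + 3)).val = 0 := rfl
  have hl : (Fin.last (N + 2)).val = N + 2 := rfl
  exact ccw_trans' (hc 0 i j (by omega) hij).rotate (hc 0 i _ (by omega) (by omega)).rotate
    (hc.ccw_zero_of_ccw_ends h01 h0last hi0).rotate (hc i j _ hij (by omega))
    (hc.ccw_last_of_ccw_ends hlast h0last (Fin.ne_last_of_lt hij))

end ends

lemma isOpen_setOf_strictlyConvexCCW {X : Type*} [TopologicalSpace X] {N : ℕ}
    {f : X → Fin N → ℝ × ℝ} (hf : ∀ i, Continuous fun x => f x i) :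
    IsOpen {x | StrictlyConvexCCW (f x)} := by
  simp only [StrictlyConvexCCW, ccw, ofPred_forall]
  refine isOpen_iInter_of_finite fun i => isOpen_iInter_of_finite fun j =>
    isOpen_iInter_of_finite fun k => isOpen_iInter_of_finite fun _ => isOpen_iInter_of_finite
      fun _ => isOpen_lt continuous_const ?_
  fun_prop

def nextVertexRegion (u v : ℝ × ℝ) : Set (ℝ × ℝ) :=
  {p | ccw (0, 0) (1, 0) p ∧ ccw u v p ∧ ccw (0, 0) v p}

lemma mem_nextVertexRegion_iff {u v p : ℝ × ℝ} :
    p ∈ nextVertexRegion u v ↔ 0 < p.2 ∧ 0 < det2 (v - u) (p - u) ∧ 0 < det2 v p := by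
  simp [nextVertexRegion, det2, ccw]

-- For such an edge `nextVertexRegion u v` is a triangle, or a half-strip when `v.2 = u.2`.
def IsAdmissibleEdge (u v : ℝ × ℝ) : Prop := 0 < v.2 ∧ 0 < det2 u v ∧ v.2 ≤ u.2

/- On `nextVertexRegion u v` the three positive affine forms `ℓ₁ = p.2`, `ℓ₂ = det2 v p` and
`ℓ₃ = det2 (v - u) (p - u)` satisfy `det2 u v * ℓ₁ + (u.2 - v.2) * ℓ₂ + v.2 * ℓ₃ = v.2 * det2 u v`,
so the projective map `p ↦ (ℓ₁ / ℓ₃, ℓ₂ / ℓ₃)` is a bijection onto the open quadrant as soon as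
`u.2 - v.2 ≥ 0`; `regionPoint` inverts it after exponentiating. -/
noncomputable def regionChart (u v p : ℝ × ℝ) : ℝ × ℝ :=
  (log (p.2 / det2 (v - u) (p - u)), log (det2 v p / det2 (v - u) (p - u)))

noncomputable def regionDenom (u v z : ℝ × ℝ) : ℝ :=
  v.2 + det2 u v * exp z.1 + (u.2 - v.2) * exp z.2

noncomputable def regionPoint (u v z : ℝ × ℝ) : ℝ × ℝ :=
  (det2 u v * (v.1 * exp z.1 - exp z.2) / regionDenom u v z,
    det2 u v * v.2 * exp z.1 / regionDenom u v z)

section regionChart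

variable {u v : ℝ × ℝ}

lemma IsAdmissibleEdge.regionDenom_pos (h : IsAdmissibleEdge u v) (z : ℝ × ℝ) :
    0 < regionDenom u v z := by
  obtain ⟨hv, hD, hle⟩ := h
  unfold regionDenom
  have := mul_nonneg (sub_nonneg.2 hle) (exp_pos z.2).le
  positivity

lemma det2_regionPoint {z : ℝ × ℝ} (hN : regionDenom u v z ≠ 0) :
    det2 v (regionPoint u v z) = det2 u v * v.2 * exp z.2 / regionDenom u v z := by
  simp only [regionPoint, det2]
  field_simp
  ring

lemma det2_sub_regionPoint {z : ℝ × ℝ} (hN : regionDenom u v z ≠ 0) :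
    det2 (v - u) (regionPoint u v z - u) = det2 u v * v.2 / regionDenom u v z := by
  simp only [regionPoint, det2, Prod.fst_sub, Prod.snd_sub]
  field_simp
  simp only [regionDenom, det2]
  ring

lemma IsAdmissibleEdge.regionPoint_mem (h : IsAdmissibleEdge u v) (z : ℝ × ℝ) :
    regionPoint u v z ∈ nextVertexRegion u v := by
  have hN := h.regionDenom_pos z
  obtain ⟨hv, hD, -⟩ := h
  rw [mem_nextVertexRegion_iff, det2_regionPoint hN.ne', det2_sub_regionPoint hN.ne']
  exact ⟨by rw [regionPoint]; positivity, by positivity, by positivity⟩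

lemma IsAdmissibleEdge.regionChart_regionPoint (h : IsAdmissibleEdge u v) (z : ℝ × ℝ) :
    regionChart u v (regionPoint u v z) = z := by
  have hN := h.regionDenom_pos z
  obtain ⟨hv, hD, -⟩ := h
  have hℓ := det2_sub_regionPoint (z := z) hN.ne'
  have h1 : (regionPoint u v z).2 / det2 (v - u) (regionPoint u v z - u) = exp z.1 := by
    rw [hℓ, regionPoint]
    field_simp
  have h2 : det2 v (regionPoint u v z) / det2 (v - u) (regionPoint u v z - u) = exp z.2 := by
    rw [hℓ, det2_regionPoint hN.ne']
    field_simp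
  simp only [regionChart, h1, h2, log_exp]

lemma IsAdmissibleEdge.regionPoint_regionChart (h : IsAdmissibleEdge u v) {p : ℝ × ℝ}
    (hp : p ∈ nextVertexRegion u v) : regionPoint u v (regionChart u v p) = p := by
  obtain ⟨hv, hD, -⟩ := h
  obtain ⟨hp2, hℓ, hvp⟩ := mem_nextVertexRegion_iff.1 hp
  set z := regionChart u v p
  have h1 : exp z.1 = p.2 / det2 (v - u) (p - u) := exp_log (div_pos hp2 hℓ)
  have h2 : exp z.2 = det2 v p / det2 (v - u) (p - u) := exp_log (div_pos hvp hℓ)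
  have hN : regionDenom u v z = v.2 * det2 u v / det2 (v - u) (p - u) := by
    rw [regionDenom, h1, h2]
    field_simp
    simp only [det2, Prod.fst_sub, Prod.snd_sub]
    ring
  rw [regionPoint, hN, h1, h2]
  ext
  · field_simp
    simp only [det2]
    ring
  · field_simp

end regionChart

lemma continuousOn_regionChart :
    ContinuousOn (fun q : ((ℝ × ℝ) × (ℝ × ℝ)) × (ℝ × ℝ) => regionChart q.1.1 q.1.2 q.2)
      {q | q.2 ∈ nextVertexRegion q.1.1 q.1.2} := by
  have hℓ : ∀ q ∈ {q : ((ℝ × ℝ) × (ℝ × ℝ)) × (ℝ × ℝ) | q.2 ∈ nextVertexRegion q.1.1 q.1.2},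
      det2 (q.1.2 - q.1.1) (q.2 - q.1.1) ≠ 0 :=
    fun q hq => (mem_nextVertexRegion_iff.1 hq).2.1.ne'
  refine ContinuousOn.prodMk ?_ ?_
  · refine ContinuousOn.log (ContinuousOn.div (by fun_prop) (by fun_prop) hℓ) fun q hq => ?_
    obtain ⟨h2, hℓ, -⟩ := mem_nextVertexRegion_iff.1 hq
    exact (div_pos h2 hℓ).ne'
  · refine ContinuousOn.log (ContinuousOn.div (by fun_prop) (by fun_prop) hℓ) fun q hq => ?_
    obtain ⟨-, hℓ, hv⟩ := mem_nextVertexRegion_iff.1 hq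
    exact (div_pos hv hℓ).ne'

lemma continuousOn_regionPoint :
    ContinuousOn (fun q : ((ℝ × ℝ) × (ℝ × ℝ)) × (ℝ × ℝ) => regionPoint q.1.1 q.1.2 q.2)
      {q | IsAdmissibleEdge q.1.1 q.1.2} := by
  have hN : ∀ q ∈ {q : ((ℝ × ℝ) × (ℝ × ℝ)) × (ℝ × ℝ) | IsAdmissibleEdge q.1.1 q.1.2},
      regionDenom q.1.1 q.1.2 q.2 ≠ 0 := fun q hq => (hq.regionDenom_pos q.2).ne'
  unfold regionPoint
  unfold regionDenom at hN ⊢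
  exact ContinuousOn.prodMk (ContinuousOn.div (by fun_prop) (by fun_prop) hN)
    (ContinuousOn.div (by fun_prop) (by fun_prop) hN)

def squareConfig (m : ℕ) (w : Fin m → ℝ × ℝ) : Fin (m + 4) → ℝ × ℝ := fun i =>
  if h : (i : ℕ) < 4 then
    (![((0 : ℝ), (0 : ℝ)), (1, 0), (1, 1), (0, 1)] : Fin 4 → ℝ × ℝ) ⟨i, h⟩
  else w ⟨(i : ℕ) - 4, by omega⟩

def squareExtensions (m : ℕ) : Set (Fin m → ℝ × ℝ) := {w | StrictlyConvexCCW (squareConfig m w)}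

def penultVertex (m : ℕ) (w : Fin m → ℝ × ℝ) : ℝ × ℝ :=
  squareConfig m w (Fin.last (m + 2)).castSucc

def lastVertex (m : ℕ) (w : Fin m → ℝ × ℝ) : ℝ × ℝ := squareConfig m w (Fin.last (m + 3))

lemma normSeedSet_add_four (m k : ℕ) :
    normSeedSet (m + 4) k = squareExtensions m ×ˢ univ.pi fun _ => Ioo 0 1 := by
  ext x
  simp only [normSeedSet, mem_prod, mem_pi, mem_univ, forall_true_left]
  rfl

lemma continuous_squareConfig_apply (m : ℕ) (i : Fin (m + 4)) :
    Continuous fun w : Fin m → ℝ × ℝ => squareConfig m w i := by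
  unfold squareConfig
  split_ifs
  · exact continuous_const
  · exact continuous_apply _

lemma squareConfig_snoc (m : ℕ) (w : Fin m → ℝ × ℝ) (p : ℝ × ℝ) :
    squareConfig (m + 1) (Fin.snoc w p) = Fin.snoc (squareConfig m w) p := by
  funext i
  simp only [squareConfig, Fin.snoc, Fin.val_castLT]
  split_ifs <;> first | rfl | omega

lemma snoc_mem_squareExtensions_iff {m : ℕ} {w : Fin m → ℝ × ℝ} {p : ℝ × ℝ} :
    Fin.snoc w p ∈ squareExtensions (m + 1) ↔
      w ∈ squareExtensions m ∧ p ∈ nextVertexRegion (penultVertex m w) (lastVertex m w) := by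
  have h0 : squareConfig m w 0 = (0, 0) := rfl
  have h1 : squareConfig m w 1 = (1, 0) := rfl
  simp only [squareExtensions, mem_ofPred_eq, squareConfig_snoc, strictlyConvexCCW_snoc_iff]
  refine and_congr_right fun hw => ⟨fun h => ?_, fun ⟨h01, hlast, h0last⟩ => ?_⟩
  · refine ⟨?_, h _ _ (Fin.castSucc_lt_last _), ?_⟩
    · simpa only [h0, h1] using h 0 1 (by simp)
    · exact h0 ▸ h 0 (Fin.last _) Fin.last_pos
  · rw [← h0, ← h1] at h01
    rw [← h0] at h0last
    exact hw.ccw_of_ccw_ends h01 hlast h0last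

lemma mem_squareExtensions_succ_iff {m : ℕ} {w : Fin (m + 1) → ℝ × ℝ} :
    w ∈ squareExtensions (m + 1) ↔ Fin.init w ∈ squareExtensions m ∧
      w (Fin.last m) ∈
        nextVertexRegion (penultVertex m (Fin.init w)) (lastVertex m (Fin.init w)) := by
  conv_lhs => rw [← Fin.snoc_init_self w]
  exact snoc_mem_squareExtensions_iff

section squareExtensions

variable {m : ℕ} {w : Fin m → ℝ × ℝ}

lemma lastVertex_snd_pos (hw : w ∈ squareExtensions m) : 0 < (lastVertex m w).2 := by
  have h : ccw (0, 0) (1, 0) (lastVertex m w) := hw 0 1 _ (by simp) (by simp [Fin.lt_def])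
  simpa [ccw_zero_left_iff, det2] using h

lemma det2_penultVertex_lastVertex_pos (hw : w ∈ squareExtensions m) :
    0 < det2 (penultVertex m w) (lastVertex m w) :=
  ccw_zero_left_iff.1 (hw 0 _ _ (by simp [Fin.lt_def]) (Fin.castSucc_lt_last _))

/- For `m > 0` the affine function `det2 (v - u) (· - u)` is positive at `(1, 0)` and `(1, 1)`,
hence at `(1, u.2)`, where it equals `(u.2 - v.2) * (1 - u.1)`. -/
lemma lastVertex_snd_le_penultVertex_snd (hw : w ∈ squareExtensions m) :
    (lastVertex m w).2 ≤ (penultVertex m w).2 := by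
  obtain _ | m := m
  · simp [lastVertex, penultVertex, squareConfig]
  set u := penultVertex (m + 1) w
  set v := lastVertex (m + 1) w
  have hu0 : ccw (0, 0) (1, 0) u :=
    hw 0 1 (Fin.last (m + 3)).castSucc (by simp) (by simp [Fin.lt_def])
  have hu1 := hw ⟨1, by omega⟩ ⟨2, by omega⟩ (Fin.last (m + 3)).castSucc
    (by simp [Fin.lt_def]) (by simp [Fin.lt_def])
  have hv := hw ⟨2, by omega⟩ ⟨3, by omega⟩ (Fin.last (m + 4))
    (by simp [Fin.lt_def]) (by simp [Fin.lt_def])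
  have huv1 := hw ⟨1, by omega⟩ _ _ (by simp [Fin.lt_def])
    (Fin.castSucc_lt_last (Fin.last (m + 3)))
  have huv2 := hw ⟨2, by omega⟩ _ _ (by simp [Fin.lt_def])
    (Fin.castSucc_lt_last (Fin.last (m + 3)))
  change ccw (1, 0) (1, 1) u at hu1
  change ccw (1, 1) (0, 1) v at hv
  change ccw (1, 0) u v at huv1
  change ccw (1, 1) u v at huv2
  simp only [ccw, det2, Prod.fst_sub, Prod.snd_sub] at hu0 hu1 hv huv1 huv2
  by_contra! h
  nlinarith [mul_pos huv1 (show 0 < 1 - u.2 by linarith), mul_pos huv2 (show 0 < u.2 by linarith)]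

lemma isAdmissibleEdge_of_mem_squareExtensions (hw : w ∈ squareExtensions m) :
    IsAdmissibleEdge (penultVertex m w) (lastVertex m w) :=
  ⟨lastVertex_snd_pos hw, det2_penultVertex_lastVertex_pos hw,
    lastVertex_snd_le_penultVertex_snd hw⟩

end squareExtensions

lemma squareExtensions_zero : squareExtensions 0 = univ := by
  refine eq_univ_of_forall fun w i j k hij hjk => ?_
  fin_cases i <;> fin_cases j <;> fin_cases k <;>
    simp_all [Fin.lt_def, ccw, det2, squareConfig]

noncomputable def squareExtensionsSuccHomeomorph (m : ℕ) :
    squareExtensions (m + 1) ≃ₜ squareExtensions m × (ℝ × ℝ) where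
  toFun x := (⟨Fin.init x.1, (mem_squareExtensions_succ_iff.1 x.2).1⟩,
    regionChart (penultVertex m (Fin.init x.1)) (lastVertex m (Fin.init x.1)) (x.1 (Fin.last m)))
  invFun y := ⟨Fin.snoc y.1.1 (regionPoint (penultVertex m y.1) (lastVertex m y.1) y.2),
    snoc_mem_squareExtensions_iff.2
      ⟨y.1.2, (isAdmissibleEdge_of_mem_squareExtensions y.1.2).regionPoint_mem y.2⟩⟩
  left_inv x := by
    obtain ⟨hinit, hlast⟩ := mem_squareExtensions_succ_iff.1 x.2
    ext1
    simp only [(isAdmissibleEdge_of_mem_squareExtensions hinit).regionPoint_regionChart hlast,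
      Fin.snoc_init_self]
  right_inv y := by
    ext1
    · ext1
      simp only [Fin.init_snoc]
    · simp only [Fin.init_snoc, Fin.snoc_last,
        (isAdmissibleEdge_of_mem_squareExtensions y.1.2).regionChart_regionPoint]
  continuous_toFun := by
    have hinit : Continuous fun x : squareExtensions (m + 1) => Fin.init x.1 :=
      continuous_subtype_val.finInit
    have hargs : Continuous fun x : squareExtensions (m + 1) =>
        ((penultVertex m (Fin.init x.1), lastVertex m (Fin.init x.1)), x.1 (Fin.last m)) :=
      (((continuous_squareConfig_apply m _).comp hinit).prodMk
        ((continuous_squareConfig_apply m _).comp hinit)).prodMk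
        ((continuous_apply _).comp continuous_subtype_val)
    exact (hinit.subtype_mk _).prodMk (continuousOn_regionChart.comp_continuous hargs fun x =>
      (mem_squareExtensions_succ_iff.1 x.2).2)
  continuous_invFun := by
    have hbase : Continuous fun y : squareExtensions m × (ℝ × ℝ) => y.1.1 :=
      continuous_subtype_val.comp continuous_fst
    have hargs : Continuous fun y : squareExtensions m × (ℝ × ℝ) =>
        ((penultVertex m y.1, lastVertex m y.1), y.2) :=
      (((continuous_squareConfig_apply m _).comp hbase).prodMk
        ((continuous_squareConfig_apply m _).comp hbase)).prodMk continuous_snd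
    exact (hbase.finSnoc (continuousOn_regionPoint.comp_continuous hargs fun y =>
      isAdmissibleEdge_of_mem_squareExtensions y.1.2)).subtype_mk _

lemma nonempty_squareExtensions_homeomorph (m : ℕ) :
    Nonempty (squareExtensions m ≃ₜ (Fin m → ℝ × ℝ)) := by
  induction m with
  | zero => exact ⟨(Homeomorph.setCongr squareExtensions_zero).trans (Homeomorph.Set.univ _)⟩
  | succ m ih =>
    obtain ⟨e⟩ := ih
    exact ⟨(squareExtensionsSuccHomeomorph m).trans <| (e.prodCongr (.refl _)).trans <|
      (Homeomorph.prodCongr (.refl _) (Homeomorph.funUnique (Fin 1) _).symm).trans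
        (Fin.appendHomeomorph m 1)⟩

def Homeomorph.Set.univPi {ι : Type*} {X : ι → Type*} [∀ i, TopologicalSpace (X i)]
    (s : ∀ i, Set (X i)) : Set.pi _root_.Set.univ s ≃ₜ ∀ i, s i where
  toEquiv := Equiv.Set.univPi s
  continuous_toFun := continuous_pi fun i =>
    ((continuous_apply i).comp continuous_subtype_val).subtype_mk _
  continuous_invFun := (continuous_pi fun i =>
    continuous_subtype_val.comp (continuous_apply i)).subtype_mk _

noncomputable def Real.sigmoidHomeomorph : ℝ ≃ₜ Ioo (0 : ℝ) 1 :=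
  ((Topology.IsEmbedding.subtypeVal.comp Topology.isEmbedding_sigmoid :
    Topology.IsEmbedding Real.sigmoid).toHomeomorph).trans (Homeomorph.setCongr Real.range_sigmoid)

lemma finrank_seedSpace (m k : ℕ) :
    Module.finrank ℝ ((Fin m → ℝ × ℝ) × (Fin k → ℝ)) = 2 * (m + 4) - 8 + k := by
  simp only [Module.finrank_prod, Module.finrank_pi_fintype, Module.finrank_self,
    Finset.sum_const, Finset.card_univ, Fintype.card_fin, smul_eq_mul]
  omega

theorem normSeedSet_open_cell_general (n k : ℕ) (hn : 4 ≤ n) :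
    (normSeedSet n k).Nonempty ∧ IsOpen (normSeedSet n k) ∧
      Nonempty (normSeedSet n k ≃ₜ (Fin (2 * n - 8 + k) → ℝ)) := by
  obtain ⟨m, rfl⟩ := Nat.exists_eq_add_of_le' hn
  rw [normSeedSet_add_four]
  obtain ⟨e⟩ := nonempty_squareExtensions_homeomorph m
  have hopen : IsOpen (squareExtensions m) :=
    isOpen_setOf_strictlyConvexCCW (continuous_squareConfig_apply m)
  let E : ↥(squareExtensions m ×ˢ univ.pi fun _ : Fin k => Ioo (0 : ℝ) 1) ≃ₜ
      (Fin (2 * (m + 4) - 8 + k) → ℝ) :=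
    (Homeomorph.Set.prod _ _).trans <|
      (e.prodCongr ((Homeomorph.Set.univPi _).trans
        (Homeomorph.piCongrRight fun _ => Real.sigmoidHomeomorph.symm))).trans
      (ContinuousLinearEquiv.ofFinrankEq
        ((finrank_seedSpace m k).trans (Module.finrank_fin_fun ℝ).symm)).toHomeomorph
  exact ⟨⟨_, (E.symm 0).2⟩, hopen.prod (isOpen_set_pi finite_univ fun _ _ => isOpen_Ioo), ⟨E⟩⟩

/-- **`C(n,k)` is an open cell of dimension `(2n-8)+k`.**  For `n ≥ 4` and
`1 ≤ k ≤ n-1`, the set `U = normSeedSet n k` parametrizing normalized seeds of type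
`(n,k)` is a nonempty open subset of `ℝ^(2n-8+k)` which is homeomorphic to
`ℝ^(2n-8+k)`. -/
theorem normSeedSet_open_cell (n k : ℕ) (hn : 4 ≤ n) (hk1 : 1 ≤ k) (hkn : k ≤ n - 1) :
    (normSeedSet n k).Nonempty ∧ IsOpen (normSeedSet n k) ∧
      Nonempty (normSeedSet n k ≃ₜ (Fin (2 * n - 8 + k) → ℝ)) :=
  normSeedSet_open_cell_general n k hn
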